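/- arXiv:1408.3846 — 3 statements merged into one kernel-verified Lean document; each statement's English description precedes it below -/
import Mathlib

section
/- Let k be a field of characteristic different from 2. A degree two rational map φ: P¹ → P¹ over k is uniquely determined by its (multiset of) fixed points together with its two critical points. That is, if φ and ψ are degree two rational maps with the same fixed points (with multiplicity) and the same critical points, then φ = ψ. -/
/-!
Agreeing fixed point cubics `dX³ + (e-a)X²Y + (f-b)XY² - cY³` force `ψ = λφ + L·(X, Y)` for a
linear form `L = sX + tY`. Substituting this into the proportionality of the Wronskians, an
explicit polynomial combination of the three resulting equations yields
`μ · Res(φ) · s = μ · Res(φ) · t = 0`. Since the two forms of `φ` have no common zero over an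
algebraically closed field, the resultant is nonzero, so `L = 0`.
-/

section QuadResultant

variable {k : Type*} [Field k]

/-- The resultant of the binary quadratic forms `aX² + bXY + cY²` and `dX² + eXY + fY²`. -/
def quadResultant (a b c d e f : k) : k :=
  (a * f - c * d) ^ 2 - (a * e - b * d) * (b * f - c * e)

lemma quadResultant_comm (a b c d e f : k) :
    quadResultant a b c d e f = quadResultant d e f a b c := by
  unfold quadResultant; ring

lemma quadResultant_ne_zero_of_leading_ne_zero [IsAlgClosed k] {a b c d e f : k}
    (hres : ∀ x y : k, ¬(x = 0 ∧ y = 0) →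
      ¬(a * x ^ 2 + b * x * y + c * y ^ 2 = 0 ∧ d * x ^ 2 + e * x * y + f * y ^ 2 = 0))
    (hd : d ≠ 0) :
    quadResultant a b c d e f ≠ 0 := by
  intro hR
  obtain ⟨z, hz⟩ := IsAlgClosed.exists_root
    (Polynomial.C d * Polynomial.X ^ 2 + Polynomial.C e * Polynomial.X + Polynomial.C f)
    (by rw [Polynomial.degree_quadratic hd]; decide)
  simp only [Polynomial.IsRoot, Polynomial.eval_add, Polynomial.eval_mul,
    Polynomial.eval_pow, Polynomial.eval_C, Polynomial.eval_X] at hz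
  set w : k := -(e / d) - z with hw
  have he : e = -(d * (z + w)) := by rw [hw]; field_simp; ring
  have hf : f = d * z * w := by rw [hw]; field_simp; linear_combination hz
  -- Poisson's formula: `Res = d² · P(z, 1) · P(w, 1)` over the roots `z, w` of `Q(·, 1)`.
  have hPoisson : d ^ 2 * ((a * z ^ 2 + b * z + c) * (a * w ^ 2 + b * w + c)) = 0 := by
    rw [← hR, quadResultant, he, hf]; ring
  rcases mul_eq_zero.1 hPoisson with h | h
  · exact pow_ne_zero 2 hd h
  rcases mul_eq_zero.1 h with hPz | hPw
  · exact hres z 1 (by simp) ⟨by linear_combination hPz, by linear_combination hz⟩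
  · exact hres w 1 (by simp) ⟨by linear_combination hPw, by rw [he, hf]; ring⟩

lemma quadResultant_ne_zero [IsAlgClosed k] {a b c d e f : k}
    (hres : ∀ x y : k, ¬(x = 0 ∧ y = 0) →
      ¬(a * x ^ 2 + b * x * y + c * y ^ 2 = 0 ∧ d * x ^ 2 + e * x * y + f * y ^ 2 = 0)) :
    quadResultant a b c d e f ≠ 0 := by
  by_cases hd : d = 0
  · by_cases ha : a = 0
    · exact absurd ⟨by rw [ha]; ring, by rw [hd]; ring⟩ (hres 1 0 (by simp))
    · rw [quadResultant_comm]
      exact quadResultant_ne_zero_of_leading_ne_zero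
        (fun x y hxy h => hres x y hxy h.symm) ha
  · exact quadResultant_ne_zero_of_leading_ne_zero hres hd

/-- If `(P', Q') = λ(P, Q) + (sX + tY)·(X, Y)` has Wronskian proportional to that of `(P, Q)`
and `Res(P, Q) ≠ 0`, then `s = t = 0`. -/
lemma linear_part_eq_zero_of_wronskian_proportional {a b c d e f lam s t mu : k}
    (hR : quadResultant a b c d e f ≠ 0) (hmu : mu ≠ 0)
    (h1 : (lam * a + s) * (lam * e + s) - (lam * b + t) * (lam * d) = mu * (a * e - b * d))
    (h2 : (lam * a + s) * (lam * f + t) - (lam * c) * (lam * d) = mu * (a * f - c * d))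
    (h3 : (lam * b + t) * (lam * f + t) - (lam * c) * (lam * e + s) = mu * (b * f - c * e)) :
    s = 0 ∧ t = 0 := by
  set A := a * e - b * d
  set B := a * f - c * d
  set C := b * f - c * e
  have hs : mu * (quadResultant a b c d e f * s) = 0 := by
    unfold quadResultant
    linear_combination (B * t + lam * (A * c + B * f)) * h1
      - (B * s + A * t + lam * (A * b + B * e)) * h2 + (A * s + lam * (A * a + B * d)) * h3
  have ht : mu * (quadResultant a b c d e f * t) = 0 := by
    unfold quadResultant
    linear_combination (C * t + lam * (B * c + C * f)) * h1
      - (C * s + B * t + lam * (B * b + C * e)) * h2 + (B * s + lam * (B * a + C * d)) * h3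
  simp only [mul_eq_zero, hmu, hR, false_or] at hs ht
  exact ⟨hs, ht⟩

end QuadResultant

/-- `φ = [aX²+bXY+cY², dX²+eXY+fY²]`. Having the same fixed points with multiplicity means
the fixed point cubic forms `dX³+(e-a)X²Y+(f-b)XY²-cY³` are proportional, and having the same
critical points means the Wronskian quadratic forms
`(ae-bd)X²+2(af-cd)XY+(bf-ce)Y²` are proportional; the conclusion `φ = ψ` means the
coefficient tuples are proportional. -/
theorem unique_rational_map_general {k : Type*} [Field k] [IsAlgClosed k]
    (a b c d e f a' b' c' d' e' f' : k)
    (hres : ∀ x y : k, ¬(x = 0 ∧ y = 0) →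
      ¬(a * x ^ 2 + b * x * y + c * y ^ 2 = 0 ∧ d * x ^ 2 + e * x * y + f * y ^ 2 = 0))
    (hfix : ∃ lam : k, lam ≠ 0 ∧ d' = lam * d ∧ e' - a' = lam * (e - a) ∧
      f' - b' = lam * (f - b) ∧ c' = lam * c)
    (hcrit : ∃ mu : k, mu ≠ 0 ∧ a' * e' - b' * d' = mu * (a * e - b * d) ∧
      a' * f' - c' * d' = mu * (a * f - c * d) ∧ b' * f' - c' * e' = mu * (b * f - c * e)) :
    ∃ nu : k, nu ≠ 0 ∧ a' = nu * a ∧ b' = nu * b ∧ c' = nu * c ∧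
      d' = nu * d ∧ e' = nu * e ∧ f' = nu * f := by
  obtain ⟨lam, hlam, hd', hea, hfb, hc'⟩ := hfix
  obtain ⟨mu, hmu, g1, g2, g3⟩ := hcrit
  obtain ⟨hs, ht⟩ := linear_part_eq_zero_of_wronskian_proportional (lam := lam)
    (s := a' - lam * a) (t := b' - lam * b) (quadResultant_ne_zero hres) hmu
    (by linear_combination g1 - a' * hea + b' * hd')
    (by linear_combination g2 - a' * hfb + lam * d * hc' + c' * hd')
    (by linear_combination g3 - b' * hfb + (lam * e + a' - lam * a) * hc' + c' * hea)
  exact ⟨lam, hlam, by linear_combination hs, by linear_combination ht, hc', hd',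
    by linear_combination hea + hs, by linear_combination hfb + ht⟩

/-- A degree two rational map `φ = [aX²+bXY+cY², dX²+eXY+fY²]` over a field of
characteristic ≠ 2 is uniquely determined by its fixed points (with multiplicity) and
its critical points.  Having the same fixed points with multiplicity means the fixed
point cubic forms `dX³+(e-a)X²Y+(f-b)XY²-cY³` are proportional, and having the same
critical points means the Wronskian quadratic forms
`(ae-bd)X²+2(af-cd)XY+(bf-ce)Y²` are proportional; the conclusion `φ = ψ` means the
coefficient tuples are proportional. -/
theorem unique_rational_map {k : Type*} [Field k] [IsAlgClosed k]
    (h2 : (2 : k) ≠ 0) (a b c d e f a' b' c' d' e' f' : k)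
    (hres : ∀ x y : k, ¬(x = 0 ∧ y = 0) →
      ¬(a * x ^ 2 + b * x * y + c * y ^ 2 = 0 ∧ d * x ^ 2 + e * x * y + f * y ^ 2 = 0))
    (hres' : ∀ x y : k, ¬(x = 0 ∧ y = 0) →
      ¬(a' * x ^ 2 + b' * x * y + c' * y ^ 2 = 0 ∧ d' * x ^ 2 + e' * x * y + f' * y ^ 2 = 0))
    (hfix : ∃ lam : k, lam ≠ 0 ∧ d' = lam * d ∧ e' - a' = lam * (e - a) ∧
      f' - b' = lam * (f - b) ∧ c' = lam * c)
    (hcrit : ∃ mu : k, mu ≠ 0 ∧ a' * e' - b' * d' = mu * (a * e - b * d) ∧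
      a' * f' - c' * d' = mu * (a * f - c * d) ∧ b' * f' - c' * e' = mu * (b * f - c * e)) :
    ∃ nu : k, nu ≠ 0 ∧ a' = nu * a ∧ b' = nu * b ∧ c' = nu * c ∧
      d' = nu * d ∧ e' = nu * e ∧ f' = nu * f :=
  unique_rational_map_general a b c d e f a' b' c' d' e' f' hres hfix hcrit
end

section
/- Let k be a field of characteristic different from 2. The map from the set of triples (ω₁, ω₂, ω₃) of fixed points (all finite, nonzero, with ω_i ≠ −ω_j for i ≠ j, and pairwise determining a degree 2 map with critical points 0, ∞) to (k∖{−1,0})³ given by rᵢ = ω_j/ω_{k'} has image contained in the surface {(r₁,r₂,r₃) : r₁r₂r₃ = 1, rᵢ ≠ −1}, and (r₁, r₂, r₃) determines (ω₁, ω₂, ω₃) up to simultaneous scaling ωᵢ ↦ λωᵢ for λ ∈ k^×. -/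
/-- With critical points normalized to `0` and `∞`, the fixed points
`(ω₁, ω₂, ω₃)` (all finite, nonzero, with `ωᵢ ≠ -ω_j` for `i ≠ j`) map via
`rᵢ = ω_j/ω_k` into the surface `{r₁r₂r₃ = 1, rᵢ ∉ {-1, 0}}`, and the cross ratios
determine `(ω₁, ω₂, ω₃)` up to simultaneous scaling `ωᵢ ↦ λωᵢ`. -/
theorem omega_determined_up_to_scaling {k : Type*} [Field k] (h2 : (2 : k) ≠ 0)
    (ω₁ ω₂ ω₃ ω₁' ω₂' ω₃' : k)
    (h1 : ω₁ ≠ 0) (h2' : ω₂ ≠ 0) (h3 : ω₃ ≠ 0)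
    (h1' : ω₁' ≠ 0) (h2'' : ω₂' ≠ 0) (h3' : ω₃' ≠ 0)
    (hne12 : ω₁ ≠ -ω₂) (hne13 : ω₁ ≠ -ω₃) (hne23 : ω₂ ≠ -ω₃)
    (hne12' : ω₁' ≠ -ω₂') (hne13' : ω₁' ≠ -ω₃') (hne23' : ω₂' ≠ -ω₃') :
    ((ω₂ / ω₃ ≠ -1 ∧ ω₂ / ω₃ ≠ 0) ∧ (ω₃ / ω₁ ≠ -1 ∧ ω₃ / ω₁ ≠ 0) ∧
      (ω₁ / ω₂ ≠ -1 ∧ ω₁ / ω₂ ≠ 0) ∧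
      (ω₂ / ω₃) * (ω₃ / ω₁) * (ω₁ / ω₂) = 1) ∧
    ((ω₂' / ω₃' = ω₂ / ω₃ ∧ ω₃' / ω₁' = ω₃ / ω₁ ∧ ω₁' / ω₂' = ω₁ / ω₂) →
      ∃ lam : k, lam ≠ 0 ∧ ω₁' = lam * ω₁ ∧ ω₂' = lam * ω₂ ∧ ω₃' = lam * ω₃) := by
  refine ⟨⟨⟨?_, div_ne_zero h2' h3⟩, ⟨?_, div_ne_zero h3 h1⟩, ⟨?_, div_ne_zero h1 h2'⟩, ?_⟩, ?_⟩
  · intro h; apply hne23; field_simp at h; exact h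
  · intro h; apply hne13; field_simp at h; linear_combination h
  · intro h; apply hne12; field_simp at h; exact h
  · field_simp
  · rintro ⟨ha, hb, hc⟩
    refine ⟨ω₁' / ω₁, div_ne_zero h1' h1, by field_simp, ?_, ?_⟩
    · field_simp at hc ⊢; linear_combination -hc
    · field_simp at hb ⊢; linear_combination hb
end

section
/- Let k be an algebraically closed field of characteristic different from 2. The set of SL₂(k)-conjugacy classes of totally marked degree two rational maps over k (ordered triples of fixed points together with an ordered pair of distinct critical points, modulo simultaneous Möbius transformation) is in bijection with W(k) = {(r₁, r₂, r₃) ∈ (k ∖ {−1, 0})³ : r₁r₂r₃ = 1} via the three cross ratios rᵢ = ((p_j − q₁)(p_{k'} − q₂))/((p_j − q₂)(p_{k'} − q₁)). -/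
/-! Cross ratios are `SL₂`-invariant, and `r₁ r₂ r₃ = 1` because each bracket `[pᵢ, qⱼ]`
occurs once in a numerator and once in a denominator.
Conversely, a determinant-one matrix moves `q₁, q₂` to `0, ∞`; no square root is needed
for this, since the images are only determined up to scalars. The tuple is then given by
three nonzero affine coordinates `xᵢ` with `rᵢ = x_{i+1} / x_{i+2}`, so equal cross ratios
force `x' = λ x`. The stabiliser `diag(t, t⁻¹)` of `0, ∞` in `SL₂` acts by `x ↦ t² x`, and
`λ` is a square because `k` is algebraically closed. -/

namespace TotallyMarked

variable {k : Type*} [Field k]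

/-- The bracket `[u, v] = u₀v₁ - u₁v₀` of two homogeneous coordinate vectors on `P¹`. -/
def br (u v : Fin 2 → k) : k := u 0 * v 1 - u 1 * v 0

/-- The cross ratio of four points of `P¹` given in homogeneous coordinates:
`((p_j - q₁)(p_k - q₂))/((p_j - q₂)(p_k - q₁))`. -/
def crossRatio (pj pk q1 q2 : Fin 2 → k) : k :=
  (br pj q1 * br pk q2) / (br pj q2 * br pk q1)

/-- The triple of cross ratios `rᵢ` of an ordered triple of fixed points and ordered
pair of critical points, `rᵢ` being built from `p_{i+1}, p_{i+2}, q₁, q₂`. -/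
def crT (p : Fin 3 → Fin 2 → k) (q : Fin 2 → Fin 2 → k) : Fin 3 → k :=
  fun i => crossRatio (p (i + 1)) (p (i + 2)) (q 0) (q 1)

/-- A totally marked degree two rational map: five points of `P¹(k)` (three ordered
fixed points and two ordered critical points) with `q₁ ≠ q₂`, all cross ratios
defined, finite and nonzero, and each cross ratio `≠ -1`. -/
def Marked (p : Fin 3 → Fin 2 → k) (q : Fin 2 → Fin 2 → k) : Prop :=
  (∀ i, p i ≠ 0) ∧ (∀ j, q j ≠ 0) ∧ br (q 0) (q 1) ≠ 0 ∧
    (∀ i j, br (p i) (q j) ≠ 0) ∧ (∀ i, crT p q i ≠ -1)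

/-- `SL₂(k)`-equivalence of totally marked tuples: a single matrix of determinant one
moves the five points (in homogeneous coordinates, up to nonzero scalars) of one tuple
to those of the other. -/
def MEquiv (p p' : Fin 3 → Fin 2 → k) (q q' : Fin 2 → Fin 2 → k) : Prop :=
  ∃ M : Matrix.SpecialLinearGroup (Fin 2) k,
    (∀ i, ∃ c : k, c ≠ 0 ∧ p' i = c • (M.val).mulVec (p i)) ∧
    (∀ j, ∃ c : k, c ≠ 0 ∧ q' j = c • (M.val).mulVec (q j))

open Matrix

lemma br_swap (u v : Fin 2 → k) : br v u = -br u v := by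
  simp only [br]
  ring

lemma br_self (u : Fin 2 → k) : br u u = 0 := by
  simp only [br]
  ring

lemma br_smul_smul (c d : k) (u v : Fin 2 → k) : br (c • u) (d • v) = c * d * br u v := by
  simp only [br, Pi.smul_apply, smul_eq_mul]
  ring

lemma br_mulVec (M : Matrix (Fin 2) (Fin 2) k) (u v : Fin 2 → k) :
    br (M *ᵥ u) (M *ᵥ v) = M.det * br u v := by
  simp only [br, mulVec, dotProduct, Fin.sum_univ_two, det_fin_two]
  ring

lemma crossRatio_smul_mulVec (M : SpecialLinearGroup (Fin 2) k) {a b c d : k}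
    (ha : a ≠ 0) (hb : b ≠ 0) (hc : c ≠ 0) (hd : d ≠ 0) (pj pk q1 q2 : Fin 2 → k) :
    crossRatio (a • M.val *ᵥ pj) (b • M.val *ᵥ pk) (c • M.val *ᵥ q1) (d • M.val *ᵥ q2) =
      crossRatio pj pk q1 q2 := by
  simp only [crossRatio, br_smul_smul, br_mulVec, M.prop, one_mul]
  rw [show a * c * br pj q1 * (b * d * br pk q2) = a * b * c * d * (br pj q1 * br pk q2) by ring,
    show a * d * br pj q2 * (b * c * br pk q1) = a * b * c * d * (br pj q2 * br pk q1) by ring,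
    mul_div_mul_left _ _ (by simp [*])]

lemma crT_eq_of_mequiv {p p' : Fin 3 → Fin 2 → k} {q q' : Fin 2 → Fin 2 → k}
    (h : MEquiv p p' q q') : crT p' q' = crT p q := by
  obtain ⟨M, hp, hq⟩ := h
  funext i
  obtain ⟨a, ha, hpa⟩ := hp (i + 1)
  obtain ⟨b, hb, hpb⟩ := hp (i + 2)
  obtain ⟨c, hc, hqc⟩ := hq 0
  obtain ⟨d, hd, hqd⟩ := hq 1
  simp only [crT, hpa, hpb, hqc, hqd, crossRatio_smul_mulVec M ha hb hc hd]

lemma smul_mulVec_smul_mulVec (M N : SpecialLinearGroup (Fin 2) k) (c d : k) (u : Fin 2 → k) :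
    d • N.val *ᵥ (c • M.val *ᵥ u) = (d * c) • (N * M).val *ᵥ u := by
  rw [mulVec_smul, smul_smul, mulVec_mulVec]
  rfl

lemma eq_inv_smul_mulVec {M : SpecialLinearGroup (Fin 2) k} {c : k} (hc : c ≠ 0)
    {u v : Fin 2 → k} (h : v = c • M.val *ᵥ u) : u = c⁻¹ • (M⁻¹).val *ᵥ v := by
  rw [h, smul_mulVec_smul_mulVec, inv_mul_cancel, inv_mul_cancel₀ hc, one_smul]
  exact (one_mulVec u).symm

lemma MEquiv.symm {p p' : Fin 3 → Fin 2 → k} {q q' : Fin 2 → Fin 2 → k}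
    (h : MEquiv p p' q q') : MEquiv p' p q' q := by
  obtain ⟨M, hp, hq⟩ := h
  refine ⟨M⁻¹, fun i => ?_, fun j => ?_⟩
  · obtain ⟨c, hc, e⟩ := hp i
    exact ⟨c⁻¹, inv_ne_zero hc, eq_inv_smul_mulVec hc e⟩
  · obtain ⟨c, hc, e⟩ := hq j
    exact ⟨c⁻¹, inv_ne_zero hc, eq_inv_smul_mulVec hc e⟩

lemma MEquiv.trans {p p' p'' : Fin 3 → Fin 2 → k} {q q' q'' : Fin 2 → Fin 2 → k}
    (h : MEquiv p p' q q') (h' : MEquiv p' p'' q' q'') : MEquiv p p'' q q'' := by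
  obtain ⟨M, hp, hq⟩ := h
  obtain ⟨N, hp', hq'⟩ := h'
  refine ⟨N * M, fun i => ?_, fun j => ?_⟩
  · obtain ⟨c, hc, e⟩ := hp i
    obtain ⟨d, hd, e'⟩ := hp' i
    exact ⟨d * c, mul_ne_zero hd hc, by rw [e', e, smul_mulVec_smul_mulVec]⟩
  · obtain ⟨c, hc, e⟩ := hq j
    obtain ⟨d, hd, e'⟩ := hq' j
    exact ⟨d * c, mul_ne_zero hd hc, by rw [e', e, smul_mulVec_smul_mulVec]⟩

-- In the coordinate `[u₀ : u₁] ↦ u₀ / u₁`: fixed points `x i`, critical points `0` and `∞`.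
def stdFixed (x : Fin 3 → k) : Fin 3 → Fin 2 → k := fun i => ![x i, 1]

def stdCrit : Fin 2 → Fin 2 → k := ![![0, 1], ![1, 0]]

lemma crT_std (x : Fin 3 → k) : crT (stdFixed x) stdCrit = fun i => x (i + 1) / x (i + 2) := by
  funext i
  simp only [crT, crossRatio, br, stdFixed, stdCrit]
  simp

lemma marked_std {x : Fin 3 → k} (hx : ∀ i, x i ≠ 0) (hcr : ∀ i, x (i + 1) / x (i + 2) ≠ -1) :
    Marked (stdFixed x) stdCrit := by
  refine ⟨fun i h => ?_, fun j h => ?_, ?_, fun i j => ?_, fun i => ?_⟩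
  · simpa [stdFixed] using congrFun h 1
  · fin_cases j
    · simpa [stdCrit] using congrFun h 1
    · simpa [stdCrit] using congrFun h 0
  · simp [br, stdCrit]
  · fin_cases j <;> simp [br, stdFixed, stdCrit, hx i]
  · simpa [crT_std] using hcr i

def toZeroInfty (q : Fin 2 → Fin 2 → k) (hq : br (q 0) (q 1) ≠ 0) :
    SpecialLinearGroup (Fin 2) k :=
  ⟨!![-q 0 1, q 0 0; -q 1 1 / br (q 0) (q 1), q 1 0 / br (q 0) (q 1)], by
    rw [det_fin_two_of]
    field_simp
    simp only [br]
    ring⟩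

lemma toZeroInfty_mulVec {q : Fin 2 → Fin 2 → k} (hq : br (q 0) (q 1) ≠ 0) (u : Fin 2 → k) :
    (toZeroInfty q hq).val *ᵥ u = ![br (q 0) u, br (q 1) u / br (q 0) (q 1)] := by
  ext j
  fin_cases j <;> simp [toZeroInfty, br, mulVec, dotProduct, Fin.sum_univ_two] <;> ring

lemma exists_mequiv_std {p : Fin 3 → Fin 2 → k} {q : Fin 2 → Fin 2 → k}
    (hq : br (q 0) (q 1) ≠ 0) (hpq : ∀ i j, br (p i) (q j) ≠ 0) :
    ∃ x : Fin 3 → k, (∀ i, x i ≠ 0) ∧ MEquiv p (stdFixed x) q stdCrit := by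
  have hqp : ∀ i j, br (q j) (p i) ≠ 0 := fun i j => by
    rw [br_swap]
    exact neg_ne_zero.mpr (hpq i j)
  refine ⟨fun i => br (q 0) (q 1) * br (q 0) (p i) / br (q 1) (p i),
    fun i => by simp [hq, hqp], toZeroInfty q hq, fun i => ?_, Fin.forall_fin_two.mpr ⟨?_, ?_⟩⟩
  · refine ⟨br (q 0) (q 1) / br (q 1) (p i), by simp [hq, hqp], ?_⟩
    rw [toZeroInfty_mulVec]
    ext j
    fin_cases j <;> simp [stdFixed] <;> field_simp [hqp]
  · refine ⟨-1, by simp, ?_⟩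
    rw [toZeroInfty_mulVec, br_self, br_swap (q 0) (q 1)]
    ext j
    fin_cases j <;> simp [stdCrit, hq]
  · refine ⟨(br (q 0) (q 1))⁻¹, by simp [hq], ?_⟩
    rw [toZeroInfty_mulVec, br_self]
    ext j
    fin_cases j <;> simp [stdCrit, hq]

lemma mequiv_std_smul (x : Fin 3 → k) {t : k} (ht : t ≠ 0) :
    MEquiv (stdFixed x) (stdFixed ((t * t) • x)) stdCrit stdCrit := by
  refine ⟨⟨!![t, 0; 0, t⁻¹], by simp [ht]⟩, fun i => ⟨t, ht, ?_⟩,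
    Fin.forall_fin_two.mpr ⟨⟨t, ht, ?_⟩, ⟨t⁻¹, inv_ne_zero ht, ?_⟩⟩⟩ <;>
  · ext j
    fin_cases j <;> simp [stdFixed, stdCrit, ht] <;> ring

lemma exists_eq_smul_of_div_eq {x x' : Fin 3 → k} (hx : ∀ i, x i ≠ 0) (hx' : ∀ i, x' i ≠ 0)
    (h : ∀ i, x (i + 1) / x (i + 2) = x' (i + 1) / x' (i + 2)) : ∃ c : k, c ≠ 0 ∧ x' = c • x := by
  have h1 := h 1
  have h2 := h 2
  simp only [Fin.isValue, Fin.reduceAdd] at h1 h2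
  rw [div_eq_div_iff (hx 0) (hx' 0)] at h1
  rw [div_eq_div_iff (hx 1) (hx' 1)] at h2
  refine ⟨x' 0 / x 0, div_ne_zero (hx' 0) (hx 0), funext fun i => ?_⟩
  fin_cases i <;> simp <;> field_simp [hx 0]
  · linear_combination h2
  · linear_combination -h1

lemma crT_ne_zero {p : Fin 3 → Fin 2 → k} {q : Fin 2 → Fin 2 → k}
    (h : ∀ i j, br (p i) (q j) ≠ 0) (i : Fin 3) : crT p q i ≠ 0 := by
  simp only [crT, crossRatio]
  simp [h]

lemma crT_mul_mul_eq_one {p : Fin 3 → Fin 2 → k} {q : Fin 2 → Fin 2 → k}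
    (h : ∀ i j, br (p i) (q j) ≠ 0) : crT p q 0 * crT p q 1 * crT p q 2 = 1 := by
  simp only [crT, crossRatio, Fin.isValue, Fin.reduceAdd, zero_add]
  field_simp [h]

lemma mequiv_of_crT_eq [IsAlgClosed k] {p p' : Fin 3 → Fin 2 → k} {q q' : Fin 2 → Fin 2 → k}
    (h : Marked p q) (h' : Marked p' q') (hcr : crT p q = crT p' q') : MEquiv p p' q q' := by
  obtain ⟨x, hx, hE⟩ := exists_mequiv_std h.2.2.1 h.2.2.2.1
  obtain ⟨x', hx', hE'⟩ := exists_mequiv_std h'.2.2.1 h'.2.2.2.1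
  have hratio : (fun i => x (i + 1) / x (i + 2)) = fun i => x' (i + 1) / x' (i + 2) := by
    rw [← crT_std, ← crT_std, crT_eq_of_mequiv hE, crT_eq_of_mequiv hE', hcr]
  obtain ⟨c, hc, rfl⟩ := exists_eq_smul_of_div_eq hx hx' (congrFun hratio)
  obtain ⟨t, rfl⟩ := IsAlgClosed.exists_eq_mul_self c
  exact (hE.trans (mequiv_std_smul x (left_ne_zero_of_mul hc))).trans hE'.symm

lemma exists_marked_crT_eq {r : Fin 3 → k} (hr : ∀ i, r i ≠ -1 ∧ r i ≠ 0)
    (hprod : r 0 * r 1 * r 2 = 1) : ∃ p q, Marked p q ∧ crT p q = r := by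
  set x : Fin 3 → k := ![1, (r 2)⁻¹, r 1]
  have hx : ∀ i, x i ≠ 0 := by
    intro i
    fin_cases i <;> simp [x, (hr _).2]
  have hcr : (fun i => x (i + 1) / x (i + 2)) = r := by
    funext i
    fin_cases i <;> simp [x]
    field_simp [(hr 1).2, (hr 2).2]
    linear_combination -hprod
  refine ⟨stdFixed x, stdCrit, marked_std hx fun i => ?_, by rw [crT_std, hcr]⟩
  rw [congrFun hcr i]
  exact (hr i).1

theorem moduli_bijection_general [IsAlgClosed k] :
    (∀ (p : Fin 3 → Fin 2 → k) (q : Fin 2 → Fin 2 → k), Marked p q →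
      (∀ i, crT p q i ≠ -1 ∧ crT p q i ≠ 0) ∧
        crT p q 0 * crT p q 1 * crT p q 2 = 1) ∧
    (∀ (p p' : Fin 3 → Fin 2 → k) (q q' : Fin 2 → Fin 2 → k),
      Marked p q → Marked p' q' → (MEquiv p p' q q' ↔ crT p q = crT p' q')) ∧
    (∀ r : Fin 3 → k, (∀ i, r i ≠ -1 ∧ r i ≠ 0) → r 0 * r 1 * r 2 = 1 →
      ∃ (p : Fin 3 → Fin 2 → k) (q : Fin 2 → Fin 2 → k), Marked p q ∧ crT p q = r) :=
  ⟨fun _ _ h => ⟨fun i => ⟨h.2.2.2.2 i, crT_ne_zero h.2.2.2.1 i⟩, crT_mul_mul_eq_one h.2.2.2.1⟩,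
    fun _ _ _ _ h h' => ⟨fun he => (crT_eq_of_mequiv he).symm, mequiv_of_crT_eq h h'⟩,
    fun _ => exists_marked_crT_eq⟩

/-- Main theorem: over an algebraically closed field of characteristic ≠ 2, the set of
`SL₂(k)`-conjugacy classes of totally marked degree two rational maps is in bijection
with `W(k) = {(r₁,r₂,r₃) ∈ (k∖{-1,0})³ : r₁r₂r₃ = 1}` via the cross ratios: the
cross ratio triple of a marked tuple lies in `W(k)`, two marked tuples are
`SL₂`-equivalent iff they have the same cross ratios, and every point of `W(k)` arises. -/
theorem moduli_bijection [IsAlgClosed k] (h2 : (2 : k) ≠ 0) :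
    (∀ (p : Fin 3 → Fin 2 → k) (q : Fin 2 → Fin 2 → k), Marked p q →
      (∀ i, crT p q i ≠ -1 ∧ crT p q i ≠ 0) ∧
        crT p q 0 * crT p q 1 * crT p q 2 = 1) ∧
    (∀ (p p' : Fin 3 → Fin 2 → k) (q q' : Fin 2 → Fin 2 → k),
      Marked p q → Marked p' q' → (MEquiv p p' q q' ↔ crT p q = crT p' q')) ∧
    (∀ r : Fin 3 → k, (∀ i, r i ≠ -1 ∧ r i ≠ 0) → r 0 * r 1 * r 2 = 1 →
      ∃ (p : Fin 3 → Fin 2 → k) (q : Fin 2 → Fin 2 → k), Marked p q ∧ crT p q = r) :=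
  moduli_bijection_general

end TotallyMarked
end
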